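/- Let K be a nonarchimedean field and let A be a Banach algebra over K whose underlying ring is Noetherian. Then every radical proper ideal J of A is spectrally reduced, i.e. there exists a bounded power-multiplicative seminorm φ on A with ker(φ) = J. In particular, every prime ideal of A is spectrally reduced, so TopSpec(A) coincides with Spec(A). -/

import Mathlib

/-!
Every ideal `I` of a Noetherian Banach algebra is closed: by the open mapping theorem, a finite
generating family `a` of the closure of `I` can be approximated by `b` in `I` with
`a = b + X a` for a matrix `X` of small norm, so that `a = (1 - X)⁻¹ b` lies in `I`.

For a radical ideal `J`, take `φ f = infₙ ‖f ^ n‖^(1/n)`, computed with the quotient norm of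
`A ⧸ J`; it is a bounded power-multiplicative seminorm vanishing on `J`. If `φ f = 0` and `p ⊇ J`
is prime, multiplication by `f` on the Banach domain `A ⧸ p` is injective with closed range,
hence bounded below, `‖y‖ ≤ C ‖y f‖`. Then `‖f‖ ≤ C ^ (n - 1) ‖f ^ n‖` in `A ⧸ p`, while
`‖f ^ n‖ < δ ^ n` for some `n` whatever `δ > 0`; so `f ∈ p`. Hence `f ∈ √J = J`.
-/

/-- A bounded power-multiplicative (nonarchimedean, submultiplicative) ring seminorm
on a seminormed commutative ring. -/
structure IsBddPowMulSeminorm {A : Type*} [SeminormedCommRing A] (φ : A → ℝ) : Prop where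
  nonneg : ∀ f, 0 ≤ φ f
  map_zero : φ 0 = 0
  map_one : φ 1 = 1
  map_neg : ∀ f, φ (-f) = φ f
  nonarch : ∀ f g, φ (f + g) ≤ max (φ f) (φ g)
  submul : ∀ f g, φ (f * g) ≤ φ f * φ g
  pow_mul : ∀ f, ∀ n : ℕ, 1 ≤ n → φ (f ^ n) = φ f ^ n
  bounded : ∃ C > 0, ∀ f, φ f ≤ C * ‖f‖

/-- An ideal is spectrally reduced if it is the kernel of some bounded
power-multiplicative seminorm. -/
def IsSpectrallyReduced {A : Type*} [SeminormedCommRing A] (I : Ideal A) : Prop :=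
  ∃ φ : A → ℝ, IsBddPowMulSeminorm φ ∧ ∀ f, f ∈ I ↔ φ f = 0

section QuotientSeminorm

variable {A : Type*} [SeminormedCommRing A]

noncomputable def Ideal.quotientSeminorm (I : Ideal A) : RingSeminorm A where
  toFun f := ‖Ideal.Quotient.mk I f‖
  map_zero' := by simp
  add_le' f g := by simpa only [map_add] using norm_add_le _ _
  neg' f := by simp only [map_neg, norm_neg]
  mul_le' f g := by simpa only [map_mul] using norm_mul_le _ _

variable {I J : Ideal A}

theorem Ideal.quotientSeminorm_apply (f : A) :
    I.quotientSeminorm f = ‖Ideal.Quotient.mk I f‖ := rfl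

theorem Ideal.quotientSeminorm_le_norm (f : A) : I.quotientSeminorm f ≤ ‖f‖ :=
  Ideal.Quotient.norm_mk_le I f

theorem Ideal.quotientSeminorm_mono (h : I ≤ J) (f : A) :
    J.quotientSeminorm f ≤ I.quotientSeminorm f := by
  simp only [Ideal.quotientSeminorm_apply]
  refine le_of_forall_pos_le_add fun ε hε => ?_
  obtain ⟨r, hr, hrf⟩ := Ideal.Quotient.norm_mk_lt (Ideal.Quotient.mk I f) hε
  have : Ideal.Quotient.mk J r = Ideal.Quotient.mk J f :=
    Ideal.Quotient.eq.mpr (h (Ideal.Quotient.eq.mp hr))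
  rw [← this]
  exact (Ideal.Quotient.norm_mk_le J r).trans hrf.le

theorem Ideal.isNonarchimedean_quotientSeminorm (hA : IsNonarchimedean (‖·‖ : A → ℝ)) :
    IsNonarchimedean I.quotientSeminorm := by
  intro f g
  simp only [Ideal.quotientSeminorm_apply]
  refine le_of_forall_pos_le_add fun ε hε => ?_
  obtain ⟨u, hu, huf⟩ := Ideal.Quotient.norm_mk_lt (Ideal.Quotient.mk I f) hε
  obtain ⟨v, hv, hvg⟩ := Ideal.Quotient.norm_mk_lt (Ideal.Quotient.mk I g) hε
  calc ‖Ideal.Quotient.mk I (f + g)‖ = ‖Ideal.Quotient.mk I (u + v)‖ := by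
        rw [map_add, map_add, hu, hv]
    _ ≤ max ‖u‖ ‖v‖ := (Ideal.Quotient.norm_mk_le I _).trans (hA u v)
    _ ≤ max ‖Ideal.Quotient.mk I f‖ ‖Ideal.Quotient.mk I g‖ + ε := by
        rw [← max_add_add_right]; exact max_le_max huf.le hvg.le

theorem Ideal.quotientSeminorm_one_le [NormOneClass A] : I.quotientSeminorm 1 ≤ 1 :=
  (Ideal.quotientSeminorm_le_norm 1).trans norm_one.le

end QuotientSeminorm

section Smoothing

variable {R : Type*} [CommRing R]

theorem smoothingFun_mono {μ ν : RingSeminorm R} (h : ∀ x, μ x ≤ ν x) (x : R) :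
    smoothingFun μ x ≤ smoothingFun ν x :=
  ciInf_mono (smoothingSeminormSeq_bddBelow μ x) fun n =>
    Real.rpow_le_rpow (apply_nonneg μ _) (h _) (by positivity)

theorem RingSeminorm.eq_zero_of_smoothingFun_eq_zero (ν : RingSeminorm R) {x : R} {C : ℝ}
    (hC : 0 < C) (hx : ∀ y, ν y ≤ C * ν (y * x)) (h0 : smoothingFun ν x = 0) : ν x = 0 := by
  have hiter : ∀ n : ℕ, ν x ≤ C ^ n * ν (x ^ (n + 1)) := by
    intro n
    induction n with
    | zero => simp
    | succ n ih =>
      calc ν x ≤ C ^ n * ν (x ^ (n + 1)) := ih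
        _ ≤ C ^ n * (C * ν (x ^ (n + 1) * x)) := by gcongr; exact hx _
        _ = C ^ (n + 1) * ν (x ^ (n + 1 + 1)) := by rw [← pow_succ]; ring
  by_contra hne
  set δ := min (ν x) C⁻¹
  have hδ : 0 < δ := lt_min ((apply_nonneg ν x).lt_of_ne' hne) (inv_pos.mpr hC)
  obtain ⟨n, hn⟩ := exists_lt_of_ciInf_lt (h0.trans_lt hδ)
  obtain ⟨m, hm⟩ : ∃ m : ℕ, (n : ℕ) = m + 1 := ⟨n.natPred, n.natPred_add_one.symm⟩
  have hpow : ν (x ^ (m + 1)) < δ ^ (m + 1) := by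
    rw [one_div, Real.rpow_inv_lt_iff_of_pos (apply_nonneg ν _) hδ.le (by positivity), hm] at hn
    exact_mod_cast hn
  have hCδ : C * δ ≤ 1 := calc
    C * δ ≤ C * C⁻¹ := by gcongr; exact min_le_right _ _
    _ = 1 := mul_inv_cancel₀ hC.ne'
  have : ν x < δ := calc
    ν x ≤ C ^ m * ν (x ^ (m + 1)) := hiter m
    _ < C ^ m * δ ^ (m + 1) := by gcongr
    _ = (C * δ) ^ m * δ := by ring
    _ ≤ δ := mul_le_of_le_one_left hδ.le (pow_le_one₀ (by positivity) hCδ)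
  exact (this.trans_le (min_le_left _ _)).false

end Smoothing

theorem exists_norm_le_mul_norm_mul_of_isClosed_span (K : Type*) [NontriviallyNormedField K]
    {B : Type*} [NormedCommRing B] [NormedAlgebra K B] [CompleteSpace B] {x : B}
    (hx : x ∈ nonZeroDivisors B) (hclosed : IsClosed (Ideal.span {x} : Set B)) :
    ∃ C > 0, ∀ y, ‖y‖ ≤ C * ‖y * x‖ := by
  let mulX : B →L[K] B := (ContinuousLinearMap.mul K B).flip x
  have hinj : Function.Injective mulX := fun y z hyz =>
    (mul_cancel_right_mem_nonZeroDivisors hx).mp hyz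
  have hrange : Set.range mulX = (Ideal.span {x} : Set B) := by
    ext y; simp [mulX, Ideal.mem_span_singleton', mul_comm]
  obtain ⟨C, hC⟩ := mulX.antilipschitz_of_injective_of_isClosed_range hinj (hrange ▸ hclosed)
  refine ⟨C + 1, by positivity, fun y => ?_⟩
  have hy : ‖y‖ ≤ C * ‖y * x‖ := by simpa [mulX, mul_comm] using hC.le_mul_norm_sub 0 y
  exact hy.trans (by gcongr; simp)

theorem Ideal.exists_norm_coeff_le (K : Type*) [NontriviallyNormedField K] {A : Type*}
    [NormedCommRing A] [NormedAlgebra K A] [CompleteSpace A] {N : Ideal A}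
    (hN : IsClosed (N : Set A)) {k : ℕ} {a : Fin k → A} (ha : Ideal.span (Set.range a) = N) :
    ∃ C > 0, ∀ y ∈ N, ∃ x : Fin k → A, ∑ i, x i * a i = y ∧ ∀ i, ‖x i‖ ≤ C * ‖y‖ := by
  have : CompleteSpace (N.restrictScalars K) := hN.completeSpace_coe
  let T : (Fin k → A) →L[K] A :=
    ∑ i, (ContinuousLinearMap.mul K A).flip (a i) ∘L ContinuousLinearMap.proj i
  have hT : ∀ x, T x = ∑ i, x i * a i := fun x => by simp [T, mul_comm]
  have hmem : ∀ x, T x ∈ N.restrictScalars K := fun x => by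
    rw [hT, ← ha]
    exact Ideal.sum_mem _ fun i _ => Ideal.mul_mem_left _ _ (Ideal.subset_span ⟨i, rfl⟩)
  have hsurj : Function.Surjective (T.codRestrict _ hmem) := by
    rintro ⟨y, hy⟩
    rw [Submodule.restrictScalars_mem, ← ha, Ideal.span,
      Submodule.mem_span_range_iff_exists_fun] at hy
    obtain ⟨x, hx⟩ := hy
    exact ⟨x, Subtype.ext (by simpa [hT] using hx)⟩
  obtain ⟨C, hC, hpre⟩ := (T.codRestrict _ hmem).exists_preimage_norm_le hsurj
  refine ⟨C, hC, fun y hy => ?_⟩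
  obtain ⟨x, hx, hxy⟩ := hpre ⟨y, hy⟩
  exact ⟨x, by rw [← hT]; exact congrArg Subtype.val hx,
    fun i => (norm_le_pi_norm x i).trans hxy⟩

section LinftyOpNorm

attribute [local instance] Matrix.linftyOpNormedRing Matrix.linftyOpNormedAddCommGroup

variable {A : Type*} [NormedCommRing A]

theorem Ideal.mem_of_eq_add_mulVec [CompleteSpace A] {I : Ideal A} {k : ℕ} {a b : Fin k → A}
    (X : Matrix (Fin k) (Fin k) A) (hX : ∀ i, ∑ j, ‖X i j‖ < 1) (hb : ∀ i, b i ∈ I)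
    (hab : a = b + X.mulVec a) (i : Fin k) : a i ∈ I := by
  have hXnorm : ‖X‖ < 1 := by
    rw [Matrix.linfty_opNorm_def, ← NNReal.coe_one, NNReal.coe_lt_coe]
    refine Finset.sup_lt_iff zero_lt_one |>.mpr fun i _ => ?_
    rw [← NNReal.coe_lt_coe]
    push_cast
    exact hX i
  have : CompleteSpace (Matrix (Fin k) (Fin k) A) := inferInstance
  have := @instHasSummableGeomSeriesOfCompleteSpace _ _ this
  let U := Units.oneSub X hXnorm
  have hUa : (U : Matrix (Fin k) (Fin k) A).mulVec a = b := by
    conv_rhs => rw [← add_sub_cancel_right b (X.mulVec a), ← hab]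
    simp [U, Matrix.sub_mulVec]
  have : a = (↑U⁻¹ : Matrix (Fin k) (Fin k) A).mulVec b := by
    rw [← hUa, Matrix.mulVec_mulVec, Units.inv_mul, Matrix.one_mulVec]
  rw [this, Matrix.mulVec, dotProduct]
  exact I.sum_mem fun j _ => I.mul_mem_left _ (hb j)

end LinftyOpNorm

theorem Ideal.isClosed_of_isNoetherianRing (K : Type*) [NontriviallyNormedField K] {A : Type*}
    [NormedCommRing A] [NormedAlgebra K A] [CompleteSpace A] [IsNoetherianRing A]
    (I : Ideal A) : IsClosed (I : Set A) := by
  obtain ⟨k, a, ha⟩ := Submodule.fg_iff_exists_fin_generating_family.mp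
    (IsNoetherian.noetherian I.closure)
  have ha_mem : ∀ i, a i ∈ I.closure := fun i =>
    ha ▸ Submodule.subset_span (Set.mem_range_self i)
  obtain ⟨C, hC, hcoeff⟩ := Ideal.exists_norm_coeff_le K (N := I.closure) isClosed_closure ha
  -- `ε` is chosen so that the rows of the error matrix `X` have norm sum `< 1`
  set ε : ℝ := ((k + 1) * C)⁻¹
  have hε : 0 < ε := by positivity
  choose b hbI hab using fun i => Metric.mem_closure_iff.mp (ha_mem i) ε hε
  choose X hX hXle using fun i =>
    hcoeff (a i - b i) (I.closure.sub_mem (ha_mem i) (subset_closure (hbI i)))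
  have hrow : ∀ i, ∑ j, ‖X i j‖ < 1 := fun i => calc
    ∑ j, ‖X i j‖ ≤ ∑ _j : Fin k, C * ε := by
        gcongr with j
        exact (hXle i j).trans (by gcongr; rw [← dist_eq_norm]; exact (hab i).le)
    _ = k / (k + 1) := by
        simp only [Finset.sum_const, Finset.card_univ, Fintype.card_fin, nsmul_eq_mul, ε]
        field_simp
    _ < 1 := by rw [div_lt_one (by positivity)]; linarith
  have haI : ∀ i, a i ∈ I := Ideal.mem_of_eq_add_mulVec (Matrix.of X) hrow hbI <| by
    funext i; simp [Matrix.mulVec, dotProduct, hX]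
  refine isClosed_of_closure_subset fun y hy => ?_
  change y ∈ I.closure at hy
  rw [← ha] at hy
  exact (Submodule.span_le.mpr (Set.range_subset_iff.mpr haI)) hy

section Kernel

variable {A : Type*} [NormedCommRing A] [CompleteSpace A] [IsNoetherianRing A]

theorem Ideal.IsPrime.mem_of_smoothingFun_quotientSeminorm_eq_zero {p : Ideal A} (hp : p.IsPrime)
    (K : Type*) [NontriviallyNormedField K] [NormedAlgebra K A] {f : A}
    (hf : smoothingFun p.quotientSeminorm f = 0) : f ∈ p := by
  have : IsClosed (p : Set A) := Ideal.isClosed_of_isNoetherianRing K p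
  by_contra hfp
  have hx : Ideal.Quotient.mk p f ∈ nonZeroDivisors (A ⧸ p) :=
    mem_nonZeroDivisors_of_ne_zero (by rwa [Ne, Ideal.Quotient.eq_zero_iff_mem])
  obtain ⟨C, hC, hbound⟩ :=
    exists_norm_le_mul_norm_mul_of_isClosed_span K hx (Ideal.isClosed_of_isNoetherianRing K _)
  have hzero := p.quotientSeminorm.eq_zero_of_smoothingFun_eq_zero hC
    (fun y => by
      simpa only [Ideal.quotientSeminorm_apply, map_mul] using hbound (Ideal.Quotient.mk p y)) hf
  exact hfp (Ideal.Quotient.eq_zero_iff_mem.mp (norm_eq_zero.mp hzero))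

theorem Ideal.IsRadical.mem_of_smoothingFun_quotientSeminorm_eq_zero {J : Ideal A}
    (hJ : J.IsRadical) (K : Type*) [NontriviallyNormedField K] [NormedAlgebra K A] {f : A}
    (hf : smoothingFun J.quotientSeminorm f = 0) : f ∈ J := by
  rw [← hJ.radical, Ideal.radical_eq_sInf, Submodule.mem_sInf]
  rintro p ⟨hJp, hp⟩
  refine hp.mem_of_smoothingFun_quotientSeminorm_eq_zero K (le_antisymm ?_ ?_)
  · exact hf ▸ smoothingFun_mono (Ideal.quotientSeminorm_mono hJp) f
  · exact Real.iInf_nonneg fun _ => Real.rpow_nonneg (apply_nonneg _ _) _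

end Kernel

theorem RingSeminorm.isBddPowMulSeminorm {A : Type*} [SeminormedCommRing A] (φ : RingSeminorm A)
    (hna : IsNonarchimedean φ) (hpow : IsPowMul φ) (h1 : φ 1 ≠ 0) (hle : ∀ f, φ f ≤ ‖f‖) :
    IsBddPowMulSeminorm φ where
  nonneg := apply_nonneg φ
  map_zero := map_zero φ
  map_one := by
    have h := hpow 1 (n := 2) one_le_two
    rw [one_pow, sq] at h
    exact (mul_eq_left₀ h1).mp h.symm
  map_neg := map_neg_eq_map φ
  nonarch := hna
  submul := map_mul_le_mul φ
  pow_mul f n hn := hpow f hn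
  bounded := ⟨1, one_pos, fun f => (hle f).trans_eq (one_mul _).symm⟩

theorem Ideal.IsRadical.isSpectrallyReduced (K : Type*) [NontriviallyNormedField K] {A : Type*}
    [NormedCommRing A] [NormOneClass A] [NormedAlgebra K A] [CompleteSpace A] [IsNoetherianRing A]
    (hA : IsNonarchimedean (‖·‖ : A → ℝ)) {J : Ideal A} (hJ : J ≠ ⊤) (hrad : J.IsRadical) :
    IsSpectrallyReduced J := by
  let φ := smoothingSeminorm J.quotientSeminorm Ideal.quotientSeminorm_one_le
    (Ideal.isNonarchimedean_quotientSeminorm hA)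
  have hker : ∀ f, f ∈ J ↔ φ f = 0 := fun f =>
    ⟨fun hf => le_antisymm ((smoothingFun_le_self _ f).trans_eq (by
        rw [Ideal.quotientSeminorm_apply, Ideal.Quotient.eq_zero_iff_mem.mpr hf, norm_zero]))
      (apply_nonneg φ f),
    hrad.mem_of_smoothingFun_quotientSeminorm_eq_zero K⟩
  refine ⟨φ, φ.isBddPowMulSeminorm ?_ ?_ ?_ ?_, hker⟩
  · exact isNonarchimedean_smoothingFun _ Ideal.quotientSeminorm_one_le
      (Ideal.isNonarchimedean_quotientSeminorm hA)
  · exact isPowMul_smoothingFun _ Ideal.quotientSeminorm_one_le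
  · exact fun h => hJ ((Ideal.eq_top_iff_one J).mpr ((hker 1).mpr h))
  · exact fun f => (smoothingFun_le_self _ f).trans (Ideal.quotientSeminorm_le_norm f)

theorem radical_ideals_spectrally_reduced_of_noetherian_banach
    {K A : Type*} [NontriviallyNormedField K]
    [NormedCommRing A] [NormOneClass A] [NormedAlgebra K A] [CompleteSpace A]
    (hA : IsNonarchimedean (fun a : A => ‖a‖))
    [IsNoetherianRing A] :
    (∀ J : Ideal A, J ≠ ⊤ → J.IsRadical → IsSpectrallyReduced J) ∧
      (∀ p : Ideal A, p.IsPrime → IsSpectrallyReduced p) :=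
  ⟨fun _ hJ hrad => hrad.isSpectrallyReduced K hA hJ,
    fun _ hp => hp.isRadical.isSpectrallyReduced K hA hp.ne_top⟩
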